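/- arXiv:1801.01165 — 8 statements merged into one kernel-verified Lean document; each statement's English description precedes it below -/
import Mathlib

section
/- A finite graph Γ = (A; R) is k-orientable (there is an orientation of its edges in which every vertex has out-degree at most k) if and only if it is k-sparse (every subset B of vertices spans at most k·|B| edges). -/
/-!
An orientation with out-degrees at most `k` counts every edge inside `B` at its tail, which lies
in `B`, so `B` spans at most `k * |B|` edges. Conversely, give every vertex `k` slots and ask for
an injective assignment of edges to slots at one of their endpoints. For a set of edges spanning
the vertex set `B`, Hall's condition reads `#edges ≤ k * |B|`, which is sparsity. Orienting each
edge away from the endpoint whose slot it occupies gives out-degrees at most `k`.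
-/

open scoped Classical

open Finset

section

variable {V : Type*}

noncomputable def edgesWithin [Fintype V] (Ed : Finset (Sym2 V)) (B : Finset V) : Finset (Sym2 V) :=
  Ed.filter fun e => ∀ x ∈ e, x ∈ B

theorem card_edgesWithin_le_sum_outdegree [Fintype V] {Ed : Finset (Sym2 V)} {S : V → V → Prop}
    (hcover : ∀ a b, s(a, b) ∈ Ed → S a b ∨ S b a) (B : Finset V) :
    #(edgesWithin Ed B) ≤ ∑ a ∈ B, #(univ.filter fun b => S a b) := by
  rw [← card_sigma]
  refine card_le_card_of_surjOn (fun p => s(p.1, p.2)) ?_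
  intro e he
  induction e using Sym2.ind with
  | _ x y =>
    simp only [edgesWithin, coe_filter, Set.mem_ofPred_eq, Sym2.mem_iff, forall_eq_or_imp,
      forall_eq] at he
    obtain ⟨hxy, hx, hy⟩ := he
    rcases hcover x y hxy with h | h
    · exact ⟨⟨x, y⟩, by simp [hx, h], rfl⟩
    · exact ⟨⟨y, x⟩, by simp [hy, h], Sym2.eq_swap⟩

section Hall

variable {k : ℕ} {Ed : Finset (Sym2 V)}

theorem card_le_card_biUnion_slots [Fintype V] (hsparse : ∀ B, #(edgesWithin Ed B) ≤ k * #B)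
    (s : Finset Ed) :
    #s ≤ #(s.biUnion fun e => (e : Sym2 V).toFinset ×ˢ (univ : Finset (Fin k))) := by
  set B := s.biUnion fun e => (e : Sym2 V).toFinset
  have hslots : (s.biUnion fun e => (e : Sym2 V).toFinset ×ˢ (univ : Finset (Fin k))) =
      B ×ˢ univ := by
    ext; simp [B]
  have hs : #s ≤ #(edgesWithin Ed B) := by
    refine card_le_card_of_injOn Subtype.val (fun e he => ?_) Subtype.val_injective.injOn
    simp only [edgesWithin, coe_filter, Set.mem_ofPred_eq]
    exact ⟨e.2, fun x hx => mem_biUnion.2 ⟨e, he, Sym2.mem_toFinset.2 hx⟩⟩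
  calc #s ≤ k * #B := hs.trans (hsparse B)
    _ = _ := by rw [hslots, card_product, card_univ, Fintype.card_fin, mul_comm]

theorem exists_tail_of_sparse [Fintype V] (hsparse : ∀ B, #(edgesWithin Ed B) ≤ k * #B) :
    ∃ tail : Ed → V, (∀ e : Ed, tail e ∈ (e : Sym2 V)) ∧
      ∀ a, #(univ.filter fun e => tail e = a) ≤ k := by
  obtain ⟨f, hinj, hf⟩ :=
    (all_card_le_biUnion_card_iff_exists_injective _).1 (card_le_card_biUnion_slots hsparse)
  refine ⟨fun e => (f e).1, fun e => Sym2.mem_toFinset.1 (mem_product.1 (hf e)).1, fun a => ?_⟩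
  calc #(univ.filter fun e => (f e).1 = a)
      ≤ #(univ : Finset (Fin k)) :=
        card_le_card_of_injOn (fun e => (f e).2) (fun _ _ => mem_coe.2 (mem_univ _))
          fun e he e' he' h => hinj <| Prod.ext ((mem_filter.1 he).2.trans
            (mem_filter.1 he').2.symm) h
    _ = k := by rw [card_univ, Fintype.card_fin]

end Hall

section Orientation

variable {Ed : Finset (Sym2 V)} {tail : Ed → V}

def orientationOfTail (tail : Ed → V) (a b : V) : Prop :=
  ∃ e : Ed, (e : Sym2 V) = s(a, b) ∧ tail e = a

theorem mk_mem_iff_orientationOfTail (htail : ∀ e : Ed, tail e ∈ (e : Sym2 V)) {a b : V} :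
    s(a, b) ∈ Ed ↔ orientationOfTail tail a b ∨ orientationOfTail tail b a := by
  constructor
  · intro h
    rcases Sym2.mem_iff.1 (htail ⟨s(a, b), h⟩) with ha | hb
    · exact Or.inl ⟨⟨s(a, b), h⟩, rfl, ha⟩
    · exact Or.inr ⟨⟨s(a, b), h⟩, Sym2.eq_swap, hb⟩
  · rintro (⟨e, he, -⟩ | ⟨e, he, -⟩)
    · exact he ▸ e.2
    · exact Sym2.eq_swap (a := a) ▸ he ▸ e.2

theorem not_orientationOfTail_and_swap (hEd : ∀ e ∈ Ed, ¬ e.IsDiag) {a b : V} :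
    ¬ (orientationOfTail tail a b ∧ orientationOfTail tail b a) := by
  rintro ⟨⟨e, he, ha⟩, ⟨e', he', hb⟩⟩
  obtain rfl : e = e' := Subtype.ext (he.trans (Sym2.eq_swap.trans he'.symm))
  exact hEd e e.2 (he ▸ Sym2.mk_isDiag_iff.2 (ha.symm.trans hb))

theorem card_orientationOfTail_le [Fintype V] (htail : ∀ e : Ed, tail e ∈ (e : Sym2 V)) (a : V) :
    #(univ.filter fun b => orientationOfTail tail a b) ≤ #(univ.filter fun e => tail e = a) := by
  refine card_le_card_of_surjOn (fun e => Sym2.Mem.other (htail e)) ?_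
  rintro b hb
  obtain ⟨e, he, ha⟩ := (mem_filter.1 (mem_coe.1 hb)).2
  refine ⟨e, mem_coe.2 (mem_filter.2 ⟨mem_univ _, ha⟩), ?_⟩
  have hother : ∀ o, s(tail e, o) = e → o = b := fun o ho => by
    rw [ha, he] at ho
    exact Sym2.congr_right.1 ho
  exact hother _ (Sym2.other_spec (htail e))

end Orientation

end

/-- A finite graph (vertex type `V`, edge set `Ed` of non-diagonal unordered pairs)
is `k`-orientable iff it is `k`-sparse. -/
theorem sparse_iff_orientable (k : ℕ) (V : Type*) [Fintype V]
    (Ed : Finset (Sym2 V)) (hEd : ∀ e ∈ Ed, ¬ e.IsDiag) :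
    (∃ S : V → V → Prop,
        (∀ a b : V, s(a, b) ∈ Ed ↔ (S a b ∨ S b a)) ∧
        (∀ a b : V, ¬ (S a b ∧ S b a)) ∧
        (∀ a : V, (Finset.univ.filter fun b => S a b).card ≤ k)) ↔
      (∀ B : Finset V, (Ed.filter fun e => ∀ x ∈ e, x ∈ B).card ≤ k * B.card) := by
  constructor
  · rintro ⟨S, hmem, -, hdeg⟩ B
    calc #(edgesWithin Ed B) ≤ ∑ a ∈ B, #(univ.filter fun b => S a b) :=
          card_edgesWithin_le_sum_outdegree (fun a b => (hmem a b).1) B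
      _ ≤ ∑ _a ∈ B, k := sum_le_sum fun a _ => hdeg a
      _ = k * #B := by rw [sum_const, smul_eq_mul, mul_comm]
  · intro hsparse
    obtain ⟨tail, htail, hfib⟩ := exists_tail_of_sparse hsparse
    exact ⟨orientationOfTail tail, fun a b => mk_mem_iff_orientationOfTail htail,
      fun a b => not_orientationOfTail_and_swap hEd,
      fun a => (card_orientationOfTail_le htail a).trans (hfib a)⟩
end

section
/- Let A ⊆ B be finite k-sparse graphs. Then A ≤_d B (i.e. δ(A) < δ(C) for every C with A ⊊ C ⊆ B) if and only if there exists a k-orientation B⁺ of B in which A is successor-d-closed, meaning A is successor-closed and every vertex of B⁺ all of whose reachable roots lie in A belongs to A. -/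
open scoped Classical

/-- Predimension `δ(B) = k|B| − #edges(B)` of a vertex subset. -/
noncomputable def delta {V : Type*} (k : ℕ) (Ed : Finset (Sym2 V)) (B : Finset V) : ℤ :=
  (k : ℤ) * B.card - (Ed.filter fun e => ∀ x ∈ e, x ∈ B).card

/-!
Orient the edges by letting each edge choose its tail among its endpoints, each vertex
offering `k` slots; an edge leaving `A` must choose its endpoint outside `A`, so that `A`
stays successor-closed. For a set of edges with admissible tails `W`, Hall's condition
bounds the edges inside `A` by sparsity of `W ∩ A` and the edges leaving `A` by
`δ(A) ≤ δ(A ∪ W)`. Once `A` is successor-closed in an orientation of out-degree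
`≤ k`, counting edges by their tails gives `δ(C) − δ(A) = Σ_{v ∈ C \ A} (k − outdeg_C v)`,
a sum of nonnegative terms which vanishes iff `C` is successor-closed and has no roots
outside `A`. Applied to the set of vertices all of whose reachable roots lie in `A`, this
turns `A ≤_d B` into successor-d-closedness, and conversely.
-/

open Finset Relation

section

variable {V : Type*} {Ed : Finset (Sym2 V)} {S : V → V → Prop} {k : ℕ} {A C : Finset V}

noncomputable def edgesIn (Ed : Finset (Sym2 V)) (C : Finset V) : Finset (Sym2 V) :=
  Ed.filter fun e => ∀ x ∈ e, x ∈ C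

theorem delta_eq_sub (k : ℕ) (Ed : Finset (Sym2 V)) (C : Finset V) :
    delta k Ed C = k * #C - #(edgesIn Ed C) := rfl

theorem mem_edgesIn {e : Sym2 V} :
    e ∈ edgesIn Ed C ↔ e ∈ Ed ∧ ∀ x ∈ e, x ∈ C :=
  mem_filter

theorem edgesIn_mono (Ed : Finset (Sym2 V)) (hAC : A ⊆ C) :
    edgesIn Ed A ⊆ edgesIn Ed C := fun _ he =>
  mem_edgesIn.2 ⟨(mem_edgesIn.1 he).1, fun x hx => hAC ((mem_edgesIn.1 he).2 x hx)⟩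

theorem card_edgesIn_le_of_delta_le (hAC : A ⊆ C) (h : delta k Ed A ≤ delta k Ed C) :
    #(edgesIn Ed C) ≤ #(edgesIn Ed A) + k * #(C \ A) := by
  rw [delta_eq_sub, delta_eq_sub] at h
  have hcard : (#C : ℤ) = #(C \ A) + #A := by
    exact_mod_cast (card_sdiff_add_card_eq_card hAC).symm
  rw [hcard] at h
  zify
  linarith

structure IsOrientation (Ed : Finset (Sym2 V)) (S : V → V → Prop) : Prop where
  mem_iff : ∀ a b, s(a, b) ∈ Ed ↔ S a b ∨ S b a
  asymm : ∀ a b, ¬ (S a b ∧ S b a)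

def SuccClosed (S : V → V → Prop) (A : Finset V) : Prop :=
  ∀ a ∈ A, ∀ b, S a b → b ∈ A

theorem SuccClosed.mem_of_reflTransGen (hA : SuccClosed S A)
    {a b : V} (ha : a ∈ A) (h : ReflTransGen S a b) : b ∈ A := by
  induction h with
  | refl => exact ha
  | tail _ hbc ih => exact hA _ ih _ hbc

theorem IsOrientation.card_edgesIn (ho : IsOrientation Ed S) (C : Finset V) :
    #(edgesIn Ed C) = ∑ v ∈ C, #(C.filter (S v)) := by
  rw [← card_sigma]
  refine (card_bij (fun p _ => s(p.1, p.2)) ?_ ?_ ?_).symm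
  · rintro ⟨a, b⟩ hp
    simp only [mem_sigma, mem_filter] at hp
    simp only [mem_edgesIn, Sym2.mem_iff, forall_eq_or_imp, forall_eq]
    exact ⟨(ho.mem_iff a b).2 (.inl hp.2.2), hp.1, hp.2.1⟩
  · rintro ⟨a, b⟩ hp ⟨a', b'⟩ hp' h
    simp only [mem_sigma, mem_filter] at hp hp'
    rcases Sym2.eq_iff.1 h with ⟨rfl, rfl⟩ | ⟨rfl, rfl⟩
    · rfl
    · exact (ho.asymm _ _ ⟨hp.2.2, hp'.2.2⟩).elim
  · intro e he
    induction e using Sym2.ind with | _ a b =>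
    simp only [mem_edgesIn, Sym2.mem_iff, forall_eq_or_imp, forall_eq] at he
    obtain ⟨hab, ha, hb⟩ := he
    rcases (ho.mem_iff a b).1 hab with h | h
    · exact ⟨⟨a, b⟩, by simp [h, ha, hb], rfl⟩
    · exact ⟨⟨b, a⟩, by simp [h, ha, hb], Sym2.eq_swap⟩

theorem IsOrientation.delta_sub_delta (ho : IsOrientation Ed S) (k : ℕ) (hAC : A ⊆ C)
    (hA : SuccClosed S A) :
    delta k Ed C - delta k Ed A = ∑ v ∈ C \ A, ((k : ℤ) - #(C.filter (S v))) := by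
  have hfilter : ∀ v ∈ A, #(A.filter (S v)) = #(C.filter (S v)) := fun v hv => by
    congr 1; ext b
    simp only [mem_filter]
    exact ⟨fun h => ⟨hAC h.1, h.2⟩, fun h => ⟨hA v hv b h.2, h.2⟩⟩
  rw [delta_eq_sub, delta_eq_sub, ho.card_edgesIn, ho.card_edgesIn, sum_congr rfl hfilter,
    ← sum_sdiff hAC, ← card_sdiff_add_card_eq_card hAC, sum_sub_distrib, sum_const]
  push_cast
  ring

def orientationOf (τ : {e // e ∈ Ed} → V) (a b : V) : Prop :=
  ∃ h : s(a, b) ∈ Ed, τ ⟨s(a, b), h⟩ = a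

theorem orientationOf_swap (τ : {e // e ∈ Ed} → V) (a b : V) :
    orientationOf τ b a ↔ ∃ h : s(a, b) ∈ Ed, τ ⟨s(a, b), h⟩ = b := by
  rw [orientationOf, Sym2.eq_swap]

theorem isOrientation_orientationOf (hEd : ∀ e ∈ Ed, ¬ e.IsDiag)
    {τ : {e // e ∈ Ed} → V} (hτ : ∀ e, τ e ∈ e.1) : IsOrientation Ed (orientationOf τ) where
  mem_iff a b := by
    refine ⟨fun h => ?_, fun h => h.elim (fun ⟨h, _⟩ => h) fun h' => ?_⟩
    · rcases Sym2.mem_iff.1 (hτ ⟨s(a, b), h⟩) with hτa | hτb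
      · exact .inl ⟨h, hτa⟩
      · exact .inr ((orientationOf_swap τ a b).2 ⟨h, hτb⟩)
    · exact ((orientationOf_swap τ a b).1 h').1
  asymm a b := by
    rintro ⟨⟨h, hτa⟩, hba⟩
    obtain ⟨_, hτb⟩ := (orientationOf_swap τ a b).1 hba
    exact hEd _ h (Sym2.mk_isDiag_iff.2 (hτa.symm.trans hτb))

section Fintype

variable [Fintype V]

noncomputable def outdeg (S : V → V → Prop) (v : V) : ℕ :=
  #(univ.filter (S v))

theorem card_filter_le_outdeg (C : Finset V) (S : V → V → Prop) (v : V) :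
    #(C.filter (S v)) ≤ outdeg S v :=
  card_le_card (filter_subset_filter _ (subset_univ C))

theorem SuccClosed.card_filter_eq_outdeg (hC : SuccClosed S C) {v : V} (hv : v ∈ C) :
    #(C.filter (S v)) = outdeg S v := by
  congr 1; ext b
  simpa using hC v hv b

theorem mem_of_card_filter_eq_outdeg {v b : V} (h : #(C.filter (S v)) = outdeg S v)
    (hvb : S v b) : b ∈ C := by
  have hsub := filter_subset_filter (S v) (subset_univ C)
  have heq := eq_of_subset_of_card_le hsub h.ge
  exact (mem_filter.1 (heq ▸ mem_filter.2 ⟨mem_univ b, hvb⟩)).1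

theorem IsOrientation.delta_le_delta (ho : IsOrientation Ed S) (hdeg : ∀ v, outdeg S v ≤ k)
    (hAC : A ⊆ C) (hA : SuccClosed S A) : delta k Ed A ≤ delta k Ed C := by
  have hsum : 0 ≤ ∑ v ∈ C \ A, ((k : ℤ) - #(C.filter (S v))) := sum_nonneg fun v _ => by
    have := (card_filter_le_outdeg C S v).trans (hdeg v); omega
  linarith [ho.delta_sub_delta k hAC hA]

theorem IsOrientation.delta_eq_delta_iff (ho : IsOrientation Ed S) (hdeg : ∀ v, outdeg S v ≤ k)
    (hAC : A ⊆ C) (hA : SuccClosed S A) :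
    delta k Ed C = delta k Ed A ↔ SuccClosed S C ∧ ∀ v ∈ C \ A, outdeg S v = k := by
  have hterm : ∀ v ∈ C \ A, 0 ≤ (k : ℤ) - #(C.filter (S v)) := fun v _ => by
    have := (card_filter_le_outdeg C S v).trans (hdeg v); omega
  rw [← sub_eq_zero, ho.delta_sub_delta k hAC hA, sum_eq_zero_iff_of_nonneg hterm]
  constructor
  · intro h
    have hfull : ∀ v ∈ C \ A, #(C.filter (S v)) = outdeg S v ∧ outdeg S v = k := fun v hv => by
      have := h v hv; have := card_filter_le_outdeg C S v; have := hdeg v; omega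
    refine ⟨fun v hv b hvb => ?_, fun v hv => (hfull v hv).2⟩
    by_cases hvA : v ∈ A
    · exact hAC (hA v hvA b hvb)
    · exact mem_of_card_filter_eq_outdeg (hfull v (mem_sdiff.2 ⟨hv, hvA⟩)).1 hvb
  · rintro ⟨hC, hk⟩ v hv
    rw [hC.card_filter_eq_outdeg (mem_sdiff.1 hv).1, hk v hv, sub_self]

theorem delta_lt_delta_of_sdClosed (ho : IsOrientation Ed S) (hdeg : ∀ v, outdeg S v ≤ k)
    (hA : SuccClosed S A)
    (hroots : ∀ v, (∀ r, outdeg S r < k → ReflTransGen S v r → ∃ a ∈ A, ReflTransGen S a r) →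
      v ∈ A)
    (hAC : A ⊆ C) (hne : A ≠ C) : delta k Ed A < delta k Ed C := by
  refine (ho.delta_le_delta hdeg hAC hA).lt_of_ne fun heq => ?_
  obtain ⟨hC, hfull⟩ := (ho.delta_eq_delta_iff hdeg hAC hA).1 heq.symm
  obtain ⟨v, hvC, hvA⟩ := exists_of_ssubset (hAC.ssubset_of_ne hne)
  refine hvA (hroots v fun r hr hvr => ⟨r, ?_, .refl⟩)
  by_contra hrA
  have := hfull r (mem_sdiff.2 ⟨hC.mem_of_reflTransGen hvC hvr, hrA⟩)
  omega

theorem sdClosed_of_dClosed (ho : IsOrientation Ed S) (hdeg : ∀ v, outdeg S v ≤ k)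
    (hA : SuccClosed S A) (hd : ∀ C, A ⊆ C → A ≠ C → delta k Ed A < delta k Ed C) (v : V)
    (hv : ∀ r, outdeg S r < k → ReflTransGen S v r → ∃ a ∈ A, ReflTransGen S a r) : v ∈ A := by
  set D := univ.filter fun w => ∀ r, outdeg S r < k → ReflTransGen S w r → r ∈ A
  have hAD : A ⊆ D := fun a ha =>
    mem_filter.2 ⟨mem_univ a, fun _ _ har => hA.mem_of_reflTransGen ha har⟩
  have hD : SuccClosed S D := fun w hw b hwb =>
    mem_filter.2 ⟨mem_univ b, fun r hr hbr => (mem_filter.1 hw).2 r hr (hbr.head hwb)⟩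
  have hfull : ∀ w ∈ D \ A, outdeg S w = k := fun w hw => by
    obtain ⟨hwD, hwA⟩ := mem_sdiff.1 hw
    by_contra hne
    exact hwA ((mem_filter.1 hwD).2 w (lt_of_le_of_ne (hdeg w) hne) .refl)
  have hAD_eq : A = D := by
    by_contra hne
    exact (hd D hAD hne).ne ((ho.delta_eq_delta_iff hdeg hAD hA).2 ⟨hD, hfull⟩).symm
  rw [hAD_eq]
  refine mem_filter.2 ⟨mem_univ v, fun r hr hvr => ?_⟩
  obtain ⟨a, ha, har⟩ := hv r hr hvr
  exact hA.mem_of_reflTransGen ha har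

noncomputable def admissibleTails (A : Finset V) (e : Sym2 V) : Finset V :=
  univ.filter fun x => x ∈ e ∧ ((∀ y ∈ e, y ∈ A) ∨ x ∉ A)

theorem card_le_mul_card_biUnion_admissibleTails (hsparse : ∀ C, #(edgesIn Ed C) ≤ k * #C)
    (hd : ∀ C, A ⊆ C → delta k Ed A ≤ delta k Ed C) {s : Finset (Sym2 V)} (hs : s ⊆ Ed) :
    #s ≤ k * #(s.biUnion (admissibleTails A)) := by
  set W := s.biUnion (admissibleTails A)
  have hmemW : ∀ e ∈ s, ∀ x ∈ e, ((∀ y ∈ e, y ∈ A) ∨ x ∉ A) → x ∈ W := fun e he x hx h =>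
    mem_biUnion.2 ⟨e, he, mem_filter.2 ⟨mem_univ x, hx, h⟩⟩
  have hinside : s.filter (fun e => ∀ y ∈ e, y ∈ A) ⊆ edgesIn Ed (W ∩ A) := fun e he => by
    obtain ⟨hes, heA⟩ := mem_filter.1 he
    exact mem_edgesIn.2 ⟨hs hes, fun x hx => mem_inter.2 ⟨hmemW e hes x hx (.inl heA), heA x hx⟩⟩
  have hleaving : s.filter (fun e => ¬ ∀ y ∈ e, y ∈ A)
      ⊆ edgesIn Ed (A ∪ W) \ edgesIn Ed A := fun e he => by
    obtain ⟨hes, heA⟩ := mem_filter.1 he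
    refine mem_sdiff.2 ⟨mem_edgesIn.2 ⟨hs hes, fun x hx => ?_⟩, fun h => heA (mem_edgesIn.1 h).2⟩
    by_cases hxA : x ∈ A
    · exact mem_union_left W hxA
    · exact mem_union_right A (hmemW e hes x hx (.inr hxA))
  have hgrowth := card_edgesIn_le_of_delta_le subset_union_left (hd (A ∪ W) subset_union_left)
  rw [union_sdiff_left] at hgrowth
  have hleaving_card : #(edgesIn Ed (A ∪ W) \ edgesIn Ed A) ≤ k * #(W \ A) := by
    rw [card_sdiff_of_subset (edgesIn_mono Ed subset_union_left)]
    omega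
  calc #s = #(s.filter (fun e => ∀ y ∈ e, y ∈ A)) + #(s.filter (fun e => ¬ ∀ y ∈ e, y ∈ A)) :=
        (card_filter_add_card_filter_not _).symm
    _ ≤ k * #(W ∩ A) + k * #(W \ A) :=
        add_le_add ((card_le_card hinside).trans (hsparse _))
          ((card_le_card hleaving).trans hleaving_card)
    _ = k * #W := by rw [← mul_add, card_inter_add_card_sdiff]

theorem exists_injective_admissibleTails (hsparse : ∀ C, #(edgesIn Ed C) ≤ k * #C)
    (hd : ∀ C, A ⊆ C → delta k Ed A ≤ delta k Ed C) :
    ∃ f : {e // e ∈ Ed} → V × Fin k,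
      Function.Injective f ∧ ∀ e, (f e).1 ∈ admissibleTails A e.1 := by
  let t : {e // e ∈ Ed} → Finset (V × Fin k) := fun e => admissibleTails A e.1 ×ˢ univ
  suffices hall : ∀ s : Finset {e // e ∈ Ed}, #s ≤ #(s.biUnion t) by
    obtain ⟨f, hf, hft⟩ := (all_card_le_biUnion_card_iff_exists_injective t).1 hall
    exact ⟨f, hf, fun e => (mem_product.1 (hft e)).1⟩
  intro s
  have hbiUnion : s.biUnion t = (s.map (Function.Embedding.subtype _)).biUnion
      (admissibleTails A) ×ˢ univ := by
    ext ⟨v, i⟩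
    simp [t]
  rw [hbiUnion, card_product, card_univ, Fintype.card_fin, mul_comm, ← card_map]
  exact card_le_mul_card_biUnion_admissibleTails hsparse hd fun e he => by
    obtain ⟨e', -, rfl⟩ := mem_map.1 he
    exact e'.2

theorem outdeg_orientationOf_le {f : {e // e ∈ Ed} → V × Fin k} (hf : Function.Injective f)
    (a : V) : outdeg (orientationOf fun e => (f e).1) a ≤ k := by
  let slot : univ.filter (orientationOf (fun e => (f e).1) a) → (univ : Finset (Fin k)) :=
    fun b => ⟨(f ⟨s(a, b), (mem_filter.1 b.2).2.1⟩).2, mem_univ _⟩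
  have hslot : Function.Injective slot := by
    rintro ⟨b, hb⟩ ⟨b', hb'⟩ h
    obtain ⟨hab, hτb⟩ := (mem_filter.1 hb).2
    obtain ⟨hab', hτb'⟩ := (mem_filter.1 hb').2
    have hfeq : f ⟨s(a, b), hab⟩ = f ⟨s(a, b'), hab'⟩ :=
      Prod.ext (hτb.trans hτb'.symm) (congrArg Subtype.val h)
    exact Subtype.ext (Sym2.congr_right.1 (congrArg Subtype.val (hf hfeq)))
  simpa [outdeg] using card_le_card_of_injective hslot

theorem succClosed_orientationOf {τ : {e // e ∈ Ed} → V}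
    (hτ : ∀ e, τ e ∈ admissibleTails A e.1) : SuccClosed (orientationOf τ) A := by
  rintro a ha b ⟨hab, hτa⟩
  have hadm := (mem_filter.1 (hτ ⟨s(a, b), hab⟩)).2.2
  rw [hτa] at hadm
  exact hadm.resolve_right (not_not.2 ha) b (Sym2.mem_mk_right a b)

end Fintype

end

/-- For finite `k`-sparse graphs `A ⊆ B`: `A ≤_d B` (δ(A) < δ(C) for all `A ⊊ C ⊆ B`)
iff there is a `k`-orientation of `B` in which `A` is successor-d-closed, i.e. `A` is
successor-closed and every vertex all of whose reachable roots lie among the roots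
reachable from `A` belongs to `A`. -/
theorem dClosed_iff_orientation_sdclosed (k : ℕ) (V : Type*) [Fintype V]
    (Ed : Finset (Sym2 V)) (hEd : ∀ e ∈ Ed, ¬ e.IsDiag)
    (hsparse : ∀ C : Finset V, (Ed.filter fun e => ∀ x ∈ e, x ∈ C).card ≤ k * C.card)
    (A : Finset V) :
    (∀ C : Finset V, A ⊆ C → A ≠ C → delta k Ed A < delta k Ed C) ↔
      (∃ S : V → V → Prop,
        (∀ a b : V, s(a, b) ∈ Ed ↔ (S a b ∨ S b a)) ∧
        (∀ a b : V, ¬ (S a b ∧ S b a)) ∧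
        (∀ a : V, (Finset.univ.filter fun b => S a b).card ≤ k) ∧
        (∀ a ∈ A, ∀ b : V, S a b → b ∈ A) ∧
        (∀ v : V,
          (∀ r : V, (Finset.univ.filter fun b => S r b).card < k →
            Relation.ReflTransGen S v r → ∃ a ∈ A, Relation.ReflTransGen S a r) →
          v ∈ A)) := by
  constructor
  · intro hd
    have hd_le : ∀ C, A ⊆ C → delta k Ed A ≤ delta k Ed C := fun C hAC => by
      rcases eq_or_ne A C with rfl | hne
      exacts [le_rfl, (hd C hAC hne).le]
    -- the same filter, up to the `Decidable` instance
    have hsparse' : ∀ C, #(edgesIn Ed C) ≤ k * #C := fun C => by unfold edgesIn; convert hsparse C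
    obtain ⟨f, hf, hft⟩ := exists_injective_admissibleTails hsparse' hd_le
    set S := orientationOf fun e => (f e).1
    have ho : IsOrientation Ed S :=
      isOrientation_orientationOf hEd fun e => (mem_filter.1 (hft e)).2.1
    have hdeg : ∀ a, outdeg S a ≤ k := outdeg_orientationOf_le hf
    have hA : SuccClosed S A := succClosed_orientationOf hft
    exact ⟨S, ho.mem_iff, ho.asymm, hdeg, hA, sdClosed_of_dClosed ho hdeg hA hd⟩
  · rintro ⟨S, hmem, hasymm, hdeg, hA, hroots⟩ C hAC hne
    exact delta_lt_delta_of_sdClosed ⟨hmem, hasymm⟩ hdeg hA hroots hAC hne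
end

section
/- Suppose A is a finite k-oriented digraph and B ⊆ A. Then the successor-d-closure sdcl_A(B) = {v ∈ A : roots_A(v) ⊆ roots_A(B)} is the smallest subset of A containing B that is both successor-closed and d-closed (where d-closed means: for every C with sdcl_A(B) ⊊ C ⊆ A, δ(sdcl_A(B)) < δ(C) for the underlying undirected graphs). -/
open scoped Classical

/-- Predimension of a vertex subset of a digraph (asymmetric, so the number of
directed edges equals the number of edges of the underlying undirected graph). -/
noncomputable def deltaD {V : Type*} [Fintype V] (k : ℕ) (S : V → V → Prop)
    (C : Finset V) : ℤ :=
  (k : ℤ) * C.card - ((C ×ˢ C).filter fun p => S p.1 p.2).card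

section Aux

variable {V : Type*} [Fintype V]

lemma card_filter_prod (S : V → V → Prop) (X Y : Finset V) :
    ((X ×ˢ Y).filter fun p => S p.1 p.2).card
      = ∑ a ∈ X, (Y.filter fun b => S a b).card := by
  classical
  rw [Finset.card_eq_sum_card_fiberwise (f := Prod.fst) (t := X)
    (fun p hp => (Finset.mem_product.1 (Finset.mem_filter.1 hp).1).1)]
  refine Finset.sum_congr rfl fun a ha => ?_
  have himg : (((X ×ˢ Y).filter fun p => S p.1 p.2).filter fun p => p.1 = a)
      = (Y.filter fun b => S a b).image (Prod.mk a) := by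
    ext p
    simp only [Finset.mem_filter, Finset.mem_product, Finset.mem_image]
    constructor
    · rintro ⟨⟨⟨h1, h2⟩, h3⟩, h4⟩
      exact ⟨p.2, ⟨h2, h4 ▸ h3⟩, by rw [← h4]⟩
    · rintro ⟨b, ⟨hb1, hb2⟩, rfl⟩
      exact ⟨⟨⟨ha, hb1⟩, hb2⟩, rfl⟩
  rw [himg, Finset.card_image_of_injective _ (fun x y h => (Prod.mk.injEq _ _ _ _ ▸ h).2)]

lemma delta_diff (k : ℕ) (S : V → V → Prop) (D C : Finset V) (hDC : D ⊆ C)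
    (hcl : ∀ a ∈ D, ∀ b ∈ C, S a b → b ∈ D) :
    deltaD k S C - deltaD k S D
      = ∑ a ∈ C \ D, ((k : ℤ) - ((C.filter fun b => S a b).card : ℤ)) := by
  classical
  have hDeq : ∀ a ∈ D, (D.filter fun b => S a b).card = (C.filter fun b => S a b).card := by
    intro a ha
    congr 1
    ext b
    simp only [Finset.mem_filter]
    exact ⟨fun ⟨hb, hs⟩ => ⟨hDC hb, hs⟩, fun ⟨hb, hs⟩ => ⟨hcl a ha b hb hs, hs⟩⟩
  have h2 : ((C ×ˢ C).filter fun p => S p.1 p.2).card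
      = ∑ a ∈ C \ D, (C.filter fun b => S a b).card
        + ((D ×ˢ D).filter fun p => S p.1 p.2).card := by
    rw [card_filter_prod, card_filter_prod, Finset.sum_congr rfl hDeq,
      Finset.sum_sdiff hDC]
  have h1 : (C \ D).card + D.card = C.card := Finset.card_sdiff_add_card_eq_card hDC
  unfold deltaD
  rw [h2, Finset.sum_sub_distrib, Finset.sum_const, nsmul_eq_mul, ← h1]
  push_cast
  ring

lemma reach_mem (S : V → V → Prop) (F : Finset V)
    (hF : ∀ a ∈ F, ∀ b : V, S a b → b ∈ F) {a b : V} (ha : a ∈ F)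
    (h : Relation.ReflTransGen S a b) : b ∈ F := by
  induction h with
  | refl => exact ha
  | tail _ hs ih => exact hF _ ih _ hs

end Aux

/-- In a finite `k`-oriented digraph, the successor-d-closure
`sdcl(B) = {v : roots(v) ⊆ roots(B)}` is the smallest subset containing `B`
that is both successor-closed and d-closed. -/
theorem sdcl_smallest (k : ℕ) (V : Type*) [Fintype V] (S : V → V → Prop)
    (hirr : ∀ a, ¬ S a a) (hasymm : ∀ a b, ¬ (S a b ∧ S b a))
    (hout : ∀ a : V, (Finset.univ.filter fun b => S a b).card ≤ k)
    (B : Finset V) :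
    -- `sdcl` is the set of vertices all of whose reachable roots are reachable from `B`
    letI sdcl : Finset V := Finset.univ.filter (fun v : V =>
      ∀ r : V, (Finset.univ.filter fun b => S r b).card < k →
        Relation.ReflTransGen S v r → ∃ b ∈ B, Relation.ReflTransGen S b r)
    (B ⊆ sdcl) ∧
    (∀ a ∈ sdcl, ∀ b : V, S a b → b ∈ sdcl) ∧
    (∀ C : Finset V, sdcl ⊆ C → sdcl ≠ C → deltaD k S sdcl < deltaD k S C) ∧
    (∀ F : Finset V, B ⊆ F →
      (∀ a ∈ F, ∀ b : V, S a b → b ∈ F) →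
      (∀ C : Finset V, F ⊆ C → F ≠ C → deltaD k S F < deltaD k S C) →
      sdcl ⊆ F) := by
  classical
  set D : Finset V := Finset.univ.filter (fun v : V =>
      ∀ r : V, (Finset.univ.filter fun b => S r b).card < k →
        Relation.ReflTransGen S v r → ∃ b ∈ B, Relation.ReflTransGen S b r) with hDdef
  have hmem : ∀ v : V, v ∈ D ↔
      (∀ r : V, (Finset.univ.filter fun b => S r b).card < k →
        Relation.ReflTransGen S v r → ∃ b ∈ B, Relation.ReflTransGen S b r) := by
    intro v
    simp [hDdef]
  have hBsub : B ⊆ D := by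
    intro b hb
    rw [hmem]
    intro r _ hbr
    exact ⟨b, hb, hbr⟩
  have hsucc : ∀ a ∈ D, ∀ b : V, S a b → b ∈ D := by
    intro a ha b hab
    rw [hmem] at ha ⊢
    intro r hr hbr
    exact ha r hr (Relation.ReflTransGen.head hab hbr)
  refine ⟨hBsub, hsucc, ?_, ?_⟩
  · -- d-closedness of D
    intro C hDC hne
    have hcl : ∀ a ∈ D, ∀ b ∈ C, S a b → b ∈ D := fun a ha b _ hs => hsucc a ha b hs
    have hdiff := delta_diff k S D C hDC hcl
    have hnonneg : ∀ a ∈ C \ D, (0 : ℤ) ≤ (k : ℤ) - ((C.filter fun b => S a b).card : ℤ) := by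
      intro a _
      have h1 : (C.filter fun b => S a b).card ≤ (Finset.univ.filter fun b => S a b).card :=
        Finset.card_le_card (fun b hb => by
          simp only [Finset.mem_filter] at hb ⊢
          exact ⟨Finset.mem_univ _, hb.2⟩)
      have h2 := hout a
      omega
    have hex : ∃ a ∈ C \ D, (C.filter fun b => S a b).card < k := by
      by_contra hno
      push_neg at hno
      have hall : ∀ a ∈ C \ D,
          (C.filter fun b => S a b) = (Finset.univ.filter fun b => S a b) := by
        intro a ha
        refine Finset.eq_of_subset_of_card_le
          (fun b hb => by
            simp only [Finset.mem_filter] at hb ⊢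
            exact ⟨Finset.mem_univ _, hb.2⟩) ?_
        exact le_trans (hout a) (hno a ha)
      have hkey : ∀ (r : V), (Finset.univ.filter fun b => S r b).card < k →
          ∀ v, Relation.ReflTransGen S v r → v ∈ C →
            ∃ b ∈ B, Relation.ReflTransGen S b r := by
        intro r hr v hvr
        induction hvr using Relation.ReflTransGen.head_induction_on with
        | refl =>
          intro hrC
          by_cases hrD : r ∈ D
          · exact (hmem r).1 hrD r hr Relation.ReflTransGen.refl
          · exfalso
            have hmemCD : r ∈ C \ D := Finset.mem_sdiff.2 ⟨hrC, hrD⟩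
            have h1 := hno r hmemCD
            have h2 : (C.filter fun b => S r b).card ≤
                (Finset.univ.filter fun b => S r b).card :=
              Finset.card_le_card (fun b hb => by
                simp only [Finset.mem_filter] at hb ⊢
                exact ⟨Finset.mem_univ _, hb.2⟩)
            omega
        | @head a c hab hbr ih =>
          intro haC
          by_cases haD : a ∈ D
          · exact (hmem a).1 haD r hr (Relation.ReflTransGen.head hab hbr)
          · have haCD : a ∈ C \ D := Finset.mem_sdiff.2 ⟨haC, haD⟩
            have hcC : c ∈ C := by
              have hc : c ∈ Finset.univ.filter fun b => S a b := by
                simp [hab]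
              rw [← hall a haCD] at hc
              exact (Finset.mem_filter.1 hc).1
            exact ih hcC
      obtain ⟨v, hvC, hvD⟩ := Finset.exists_of_ssubset (hDC.ssubset_of_ne hne)
      apply hvD
      rw [hmem]
      intro r hr hvr
      exact hkey r hr v hvr hvC
    obtain ⟨a, haCD, halt⟩ := hex
    have hpos : (0 : ℤ) < ∑ a ∈ C \ D, ((k : ℤ) - ((C.filter fun b => S a b).card : ℤ)) := by
      refine Finset.sum_pos' hnonneg ⟨a, haCD, ?_⟩
      omega
    linarith
  · -- minimality
    intro F hBF hFsucc hFdcl v hvD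
    by_contra hvF
    set C : Finset V := F ∪ D with hCdef
    have hFC : F ⊆ C := Finset.subset_union_left
    have hcl : ∀ a ∈ F, ∀ b ∈ C, S a b → b ∈ F := fun a ha b _ hs => hFsucc a ha b hs
    have hdiff := delta_diff k S F C hFC hcl
    have hterms : ∀ a ∈ C \ F, ((k : ℤ) - ((C.filter fun b => S a b).card : ℤ)) = 0 := by
      intro a ha
      obtain ⟨haC, haF⟩ := Finset.mem_sdiff.1 ha
      have haD : a ∈ D := by
        rcases Finset.mem_union.1 haC with h | h
        · exact absurd h haF
        · exact h
      have hfe : (C.filter fun b => S a b) = Finset.univ.filter fun b => S a b := by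
        ext b
        simp only [Finset.mem_filter]
        constructor
        · rintro ⟨_, hs⟩
          exact ⟨Finset.mem_univ _, hs⟩
        · rintro ⟨_, hs⟩
          exact ⟨Finset.mem_union_right _ (hsucc a haD b hs), hs⟩
      have hnotroot : ¬ (Finset.univ.filter fun b => S a b).card < k := by
        intro hroot
        obtain ⟨b, hbB, hba⟩ := (hmem a).1 haD a hroot Relation.ReflTransGen.refl
        exact haF (reach_mem S F hFsucc (hBF hbB) hba)
      have h2 := hout a
      rw [hfe]
      omega
    have hsum0 : deltaD k S C - deltaD k S F = 0 := by
      rw [hdiff]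
      exact Finset.sum_eq_zero hterms
    have hne : F ≠ C := by
      intro h
      apply hvF
      rw [h]
      exact Finset.mem_union_right F hvD
    have := hFdcl C hFC hne
    linarith
end

section
/- Let B be a finite k-sparse graph. If A ≤_s B and X ⊆ B, then A ∩ X ≤_s X, where A ≤_s B means δ(A) ≤ δ(C) whenever A ⊆ C ⊆ B. -/
open scoped Classical

lemma delta_submod {V : Type*} [DecidableEq V] (k : ℕ) (Ed : Finset (Sym2 V))
    (A C : Finset V) :
    delta k Ed (A ∪ C) + delta k Ed (A ∩ C) ≤ delta k Ed A + delta k Ed C := by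
  have hcard : (A ∪ C).card + (A ∩ C).card = A.card + C.card :=
    Finset.card_union_add_card_inter A C
  have hint : (Ed.filter fun e => ∀ x ∈ e, x ∈ A) ∩ (Ed.filter fun e => ∀ x ∈ e, x ∈ C)
      = Ed.filter fun e => ∀ x ∈ e, x ∈ A ∩ C := by
    ext e
    simp only [Finset.mem_inter, Finset.mem_filter]
    constructor
    · rintro ⟨⟨he, hA⟩, ⟨_, hC⟩⟩
      exact ⟨he, fun x hx => ⟨hA x hx, hC x hx⟩⟩
    · rintro ⟨he, h⟩
      exact ⟨⟨he, fun x hx => (h x hx).1⟩, ⟨he, fun x hx => (h x hx).2⟩⟩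
  have hunion : (Ed.filter fun e => ∀ x ∈ e, x ∈ A) ∪ (Ed.filter fun e => ∀ x ∈ e, x ∈ C)
      ⊆ Ed.filter fun e => ∀ x ∈ e, x ∈ A ∪ C := by
    intro e he
    rcases Finset.mem_union.mp he with h | h <;>
      simp only [Finset.mem_filter] at h ⊢ <;>
      exact ⟨h.1, fun x hx => Finset.mem_union.mpr (by
        first
        | exact Or.inl (h.2 x hx)
        | exact Or.inr (h.2 x hx))⟩
  have hE : ((Ed.filter fun e => ∀ x ∈ e, x ∈ A).card : ℤ)
      + (Ed.filter fun e => ∀ x ∈ e, x ∈ C).card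
      ≤ (Ed.filter fun e => ∀ x ∈ e, x ∈ A ∪ C).card
      + (Ed.filter fun e => ∀ x ∈ e, x ∈ A ∩ C).card := by
    have := Finset.card_union_add_card_inter (Ed.filter fun e => ∀ x ∈ e, x ∈ A)
      (Ed.filter fun e => ∀ x ∈ e, x ∈ C)
    have hle := Finset.card_le_card hunion
    rw [hint] at this
    omega
  simp only [delta]
  have h2 : (k:ℤ) * (A ∪ C).card + (k:ℤ) * (A ∩ C).card = (k:ℤ) * A.card + (k:ℤ) * C.card := by
    have : ((A ∪ C).card : ℤ) + (A ∩ C).card = A.card + C.card := by exact_mod_cast hcard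
    ring_nf
    linear_combination (k:ℤ) * this
  linarith

/-- In a finite `k`-sparse graph `B` (here the whole vertex set): if `A ≤_s B`
and `X ⊆ B`, then `A ∩ X ≤_s X`. -/
theorem inter_strong (k : ℕ) (V : Type*) [Fintype V] [DecidableEq V]
    (Ed : Finset (Sym2 V)) (hEd : ∀ e ∈ Ed, ¬ e.IsDiag)
    (hsparse : ∀ C : Finset V, (Ed.filter fun e => ∀ x ∈ e, x ∈ C).card ≤ k * C.card)
    (A : Finset V)
    (hA : ∀ C : Finset V, A ⊆ C → delta k Ed A ≤ delta k Ed C)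
    (X : Finset V) :
    ∀ C : Finset V, A ∩ X ⊆ C → C ⊆ X → delta k Ed (A ∩ X) ≤ delta k Ed C := by
  intro C hAXC hCX
  have hAC : A ∩ C = A ∩ X := by
    apply Finset.Subset.antisymm
    · exact Finset.inter_subset_inter (Finset.Subset.refl A) hCX
    · intro x hx
      exact Finset.mem_inter.mpr ⟨(Finset.mem_inter.mp hx).1, hAXC hx⟩
  have hsub := delta_submod k Ed A C
  have hup := hA (A ∪ C) Finset.subset_union_left
  rw [hAC] at hsub
  linarith
end

section
/- Let F : ℝ≥0 → ℝ≥0 be continuous increasing with F(0)=0 and F(x)→∞, and let C_F be the class of finite graphs B such that δ(A) ≥ F(|A|) for all A ⊆ B, where δ(A) = k|A| − |E(A)|. Then for B ∈ C_F and A ⊆ B, the d-closure satisfies |cl_B^d(A)| ≤ F⁻¹(k|A|). -/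
open scoped Classical

/-- `D` is d-closed in the ambient graph. -/
noncomputable def dClosed {V : Type*} [Fintype V] (k : ℕ) (Ed : Finset (Sym2 V))
    (D : Finset V) : Prop :=
  ∀ C : Finset V, D ⊆ C → D ≠ C → delta k Ed D < delta k Ed C

/-- The d-closure of `A`: the intersection of all d-closed sets containing `A`. -/
noncomputable def dcl {V : Type*} [Fintype V] (k : ℕ) (Ed : Finset (Sym2 V))
    (A : Finset V) : Finset V :=
  Finset.univ.filter fun v => ∀ D : Finset V, A ⊆ D → dClosed k Ed D → v ∈ D

/-- If `B ∈ C_F`, i.e. `δ(A) ≥ F(|A|)` for all `A ⊆ B`, with `F` continuous,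
increasing, unbounded and `F(0) = 0`, and `g` is the inverse function of `F`, then
`|cl^d(A)| ≤ F⁻¹(k·|A|)`. -/
theorem dcl_card_bound (k : ℕ) (V : Type*) [Fintype V]
    (Ed : Finset (Sym2 V)) (hEd : ∀ e ∈ Ed, ¬ e.IsDiag)
    (F g : ℝ → ℝ)
    (hFcont : ContinuousOn F (Set.Ici 0))
    (hFmono : StrictMonoOn F (Set.Ici 0))
    (hF0 : F 0 = 0)
    (hFtop : Filter.Tendsto F Filter.atTop Filter.atTop)
    (hgF : ∀ x : ℝ, 0 ≤ x → g (F x) = x)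
    (hFg : ∀ y : ℝ, 0 ≤ y → F (g y) = y)
    (hgmono : MonotoneOn g (Set.Ici 0))
    (hCF : ∀ A : Finset V, (F A.card : ℝ) ≤ (delta k Ed A : ℝ))
    (A : Finset V) :
    ((dcl k Ed A).card : ℝ) ≤ g (k * A.card) := by
  classical
  set N : ℤ := (Fintype.card V : ℤ) + 1 with hN
  have hNpos : 0 < N := by positivity
  obtain ⟨D, hD_mem, hDmin⟩ := Finset.exists_min_image
    (Finset.univ.filter fun D : Finset V => A ⊆ D)
    (fun D => N * delta k Ed D - (D.card : ℤ))
    ⟨A, by simp⟩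
  simp only [Finset.mem_filter] at hD_mem
  have hAD : A ⊆ D := hD_mem.2
  have hmin : ∀ C : Finset V, A ⊆ C →
      N * delta k Ed D - (D.card : ℤ) ≤ N * delta k Ed C - (C.card : ℤ) := by
    intro C hC
    exact hDmin C (by simp [hC])
  have hcardle : ∀ C : Finset V, (C.card : ℤ) ≤ (Fintype.card V : ℤ) := by
    intro C
    exact_mod_cast Finset.card_le_univ C
  -- D is d-closed
  have hDclosed : dClosed k Ed D := by
    intro C hDC hne
    have hAC : A ⊆ C := hAD.trans hDC
    have h1 := hmin C hAC
    have hlt : (D.card : ℤ) < (C.card : ℤ) := by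
      exact_mod_cast Finset.card_lt_card (Finset.ssubset_iff_subset_ne.mpr ⟨hDC, hne⟩)
    by_contra hge
    push_neg at hge
    have : N * delta k Ed C ≤ N * delta k Ed D :=
      mul_le_mul_of_nonneg_left hge hNpos.le
    omega
  -- δ(D) ≤ δ(A)
  have hdle : delta k Ed D ≤ delta k Ed A := by
    have h1 := hmin A (Finset.Subset.refl A)
    have h2 := hcardle D
    have h3 : (0:ℤ) ≤ (A.card : ℤ) := Int.natCast_nonneg _
    by_contra hgt
    push_neg at hgt
    have : delta k Ed A + 1 ≤ delta k Ed D := hgt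
    nlinarith
  -- dcl A ⊆ D
  have hsub : dcl k Ed A ⊆ D := by
    intro v hv
    simp only [dcl, Finset.mem_filter, Finset.mem_univ, true_and] at hv
    exact hv D hAD hDclosed
  have hcard : ((dcl k Ed A).card : ℝ) ≤ (D.card : ℝ) := by
    exact_mod_cast Finset.card_le_card hsub
  -- δ(A) ≤ k|A|
  have hdA : (delta k Ed A : ℝ) ≤ (k : ℝ) * A.card := by
    have : delta k Ed A ≤ (k : ℤ) * A.card := by
      unfold delta
      have : (0:ℤ) ≤ ((Ed.filter fun e => ∀ x ∈ e, x ∈ A).card : ℤ) := Int.natCast_nonneg _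
      omega
    exact_mod_cast this
  have hFD : F (D.card : ℝ) ≤ (k : ℝ) * A.card := by
    have h1 := hCF D
    have h2 : (delta k Ed D : ℝ) ≤ (delta k Ed A : ℝ) := by exact_mod_cast hdle
    linarith
  have hFD0 : 0 ≤ F (D.card : ℝ) := by
    rcases eq_or_lt_of_le (Nat.cast_nonneg D.card : (0:ℝ) ≤ D.card) with h | h
    · rw [← h, hF0]
    · rw [← hF0]
      exact (hFmono Set.self_mem_Ici (le_of_lt h) h).le
  have hkA0 : (0:ℝ) ≤ (k : ℝ) * A.card := by positivity
  calc ((dcl k Ed A).card : ℝ) ≤ (D.card : ℝ) := hcard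
    _ = g (F (D.card : ℝ)) := (hgF _ (Nat.cast_nonneg _)).symm
    _ ≤ g ((k : ℝ) * A.card) := hgmono hFD0 hkA0 hFD
end

section
/- Let F : ℝ≥0 → ℝ≥0 satisfy F(x+y) ≤ F(x) + y/x for all x > 0, y ≥ 0. Let A, B₁, B₂ be finite graphs with A an induced subgraph of both B₁ and B₂, with A ≤_d B₁ and A ≤_d B₂, A ≠ B₁, A ≠ B₂, and suppose δ(D) ≥ F(|D|) for all induced subgraphs D of B₁ or B₂. Let E be the free amalgam of B₁ and B₂ over A. Then δ(E) ≥ F(|E|). -/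
open scoped Classical

lemma delta_union_aux {V : Type*} [DecidableEq V] (k : ℕ) (Ed : Finset (Sym2 V))
    (A B₁ B₂ : Finset V) (hA1 : A ⊆ B₁) (hA2 : A ⊆ B₂) (hcap : B₁ ∩ B₂ = A)
    (hfree : ∀ e ∈ Ed, (∀ x ∈ e, x ∈ B₁) ∨ (∀ x ∈ e, x ∈ B₂)) :
    delta k Ed (B₁ ∪ B₂) = delta k Ed B₁ + delta k Ed B₂ - delta k Ed A := by
  classical
  set E₁ := Ed.filter fun e => ∀ x ∈ e, x ∈ B₁ with hE1
  set E₂ := Ed.filter fun e => ∀ x ∈ e, x ∈ B₂ with hE2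
  have hEU : Ed.filter (fun e => ∀ x ∈ e, x ∈ B₁ ∪ B₂) = E₁ ∪ E₂ := by
    ext e
    simp only [hE1, hE2, Finset.mem_filter, Finset.mem_union]
    constructor
    · rintro ⟨he, -⟩
      rcases hfree e he with h | h
      · exact Or.inl ⟨he, h⟩
      · exact Or.inr ⟨he, h⟩
    · rintro (⟨he, h⟩ | ⟨he, h⟩) <;>
        exact ⟨he, fun x hx => by simp [Finset.mem_union, h x hx]⟩
  have hEA : E₁ ∩ E₂ = Ed.filter fun e => ∀ x ∈ e, x ∈ A := by
    ext e
    simp only [hE1, hE2, Finset.mem_inter, Finset.mem_filter]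
    constructor
    · rintro ⟨⟨he, h1⟩, ⟨-, h2⟩⟩
      refine ⟨he, fun x hx => ?_⟩
      rw [← hcap, Finset.mem_inter]
      exact ⟨h1 x hx, h2 x hx⟩
    · rintro ⟨he, h⟩
      exact ⟨⟨he, fun x hx => hA1 (h x hx)⟩, ⟨he, fun x hx => hA2 (h x hx)⟩⟩
  have hedges : (E₁ ∪ E₂).card + (Ed.filter fun e => ∀ x ∈ e, x ∈ A).card
      = E₁.card + E₂.card := by
    rw [← hEA]; exact Finset.card_union_add_card_inter E₁ E₂
  have hverts : (B₁ ∪ B₂).card + A.card = B₁.card + B₂.card := by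
    rw [← hcap]; exact Finset.card_union_add_card_inter B₁ B₂
  simp only [delta, hEU]
  have h1 : ((B₁ ∪ B₂).card : ℤ) + A.card = B₁.card + B₂.card := by exact_mod_cast hverts
  have h2 : ((E₁ ∪ E₂).card : ℤ) + ((Ed.filter fun e => ∀ x ∈ e, x ∈ A).card : ℤ)
      = E₁.card + E₂.card := by exact_mod_cast hedges
  rw [← hE1, ← hE2]
  have h1k : (k : ℤ) * (B₁ ∪ B₂).card + (k : ℤ) * A.card
      = (k : ℤ) * B₁.card + (k : ℤ) * B₂.card := by linear_combination (k : ℤ) * h1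
  linarith

lemma free_amalgam_delta_aux (k : ℕ) (V : Type*) [Fintype V] [DecidableEq V]
    (Ed : Finset (Sym2 V))
    (F : ℝ → ℝ) (hF : ∀ x y : ℝ, 0 < x → 0 ≤ y → F (x + y) ≤ F x + y / x)
    (A B₁ B₂ : Finset V)
    (hA1 : A ⊆ B₁) (hA2 : A ⊆ B₂) (hcap : B₁ ∩ B₂ = A)
    (hne1 : A ≠ B₁) (hne2 : A ≠ B₂)
    (hfree : ∀ e ∈ Ed, (∀ x ∈ e, x ∈ B₁) ∨ (∀ x ∈ e, x ∈ B₂))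
    (hd1 : ∀ C : Finset V, A ⊆ C → C ⊆ B₁ → A ≠ C → delta k Ed A < delta k Ed C)
    (hF2 : ∀ D : Finset V, D ⊆ B₂ → (F D.card : ℝ) ≤ (delta k Ed D : ℝ))
    (hle : (B₁.card : ℝ) - A.card ≤ B₂.card) :
    (F (B₁ ∪ B₂).card : ℝ) ≤ (delta k Ed (B₁ ∪ B₂) : ℝ) := by
  have hdU := delta_union_aux k Ed A B₁ B₂ hA1 hA2 hcap hfree
  have hAB1 : (A.card : ℝ) ≤ B₁.card := by exact_mod_cast Finset.card_le_card hA1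
  have hB2pos : (0 : ℝ) < B₂.card := by
    have : A.card < B₂.card := Finset.card_lt_card (HasSubset.Subset.ssubset_of_ne hA2 hne2)
    have : 0 < B₂.card := Nat.lt_of_le_of_lt (Nat.zero_le _) this
    exact_mod_cast this
  have hcardU : ((B₁ ∪ B₂).card : ℝ) = (B₂.card : ℝ) + ((B₁.card : ℝ) - A.card) := by
    have hverts : (B₁ ∪ B₂).card + A.card = B₁.card + B₂.card := by
      rw [← hcap]; exact Finset.card_union_add_card_inter B₁ B₂
    have : ((B₁ ∪ B₂).card : ℝ) + A.card = B₁.card + B₂.card := by exact_mod_cast hverts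
    linarith
  have hy : (0 : ℝ) ≤ (B₁.card : ℝ) - A.card := by linarith
  have h1 : F ((B₁ ∪ B₂).card : ℝ) ≤ F (B₂.card : ℝ) + ((B₁.card : ℝ) - A.card) / B₂.card := by
    rw [hcardU]; exact hF _ _ hB2pos hy
  have h2 : ((B₁.card : ℝ) - A.card) / B₂.card ≤ 1 := by
    rw [div_le_one hB2pos]; exact hle
  have h3 : (F (B₂.card : ℝ)) ≤ (delta k Ed B₂ : ℝ) := hF2 B₂ le_rfl
  have h4 : delta k Ed A + 1 ≤ delta k Ed B₁ := hd1 B₁ hA1 le_rfl hne1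
  have h4' : (delta k Ed A : ℝ) + 1 ≤ (delta k Ed B₁ : ℝ) := by exact_mod_cast h4
  have hdU' : (delta k Ed (B₁ ∪ B₂) : ℝ)
      = (delta k Ed B₁ : ℝ) + (delta k Ed B₂ : ℝ) - (delta k Ed A : ℝ) := by
    exact_mod_cast congrArg (fun z : ℤ => (z : ℝ)) hdU
  linarith

/-- Free amalgamation for `C_F`: if `F(x+y) ≤ F(x) + y/x`, `A ≤_d B₁, B₂` properly,
both `B₁, B₂` satisfy `δ(D) ≥ F(|D|)` for all subsets, and `E = B₁ ∪ B₂` is the free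
amalgam over `A = B₁ ∩ B₂` (every edge lies inside `B₁` or inside `B₂`), then
`δ(E) ≥ F(|E|)`. -/
theorem free_amalgam_delta (k : ℕ) (V : Type*) [Fintype V] [DecidableEq V]
    (Ed : Finset (Sym2 V)) (hEd : ∀ e ∈ Ed, ¬ e.IsDiag)
    (F : ℝ → ℝ) (hF : ∀ x y : ℝ, 0 < x → 0 ≤ y → F (x + y) ≤ F x + y / x)
    (A B₁ B₂ : Finset V)
    (hA1 : A ⊆ B₁) (hA2 : A ⊆ B₂) (hcap : B₁ ∩ B₂ = A)
    (hne1 : A ≠ B₁) (hne2 : A ≠ B₂)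
    (hfree : ∀ e ∈ Ed, (∀ x ∈ e, x ∈ B₁) ∨ (∀ x ∈ e, x ∈ B₂))
    (hd1 : ∀ C : Finset V, A ⊆ C → C ⊆ B₁ → A ≠ C → delta k Ed A < delta k Ed C)
    (hd2 : ∀ C : Finset V, A ⊆ C → C ⊆ B₂ → A ≠ C → delta k Ed A < delta k Ed C)
    (hF1 : ∀ D : Finset V, D ⊆ B₁ → (F D.card : ℝ) ≤ (delta k Ed D : ℝ))
    (hF2 : ∀ D : Finset V, D ⊆ B₂ → (F D.card : ℝ) ≤ (delta k Ed D : ℝ)) :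
    (F (B₁ ∪ B₂).card : ℝ) ≤ (delta k Ed (B₁ ∪ B₂) : ℝ) := by
  rcases le_or_gt ((B₁.card : ℝ) - A.card) (B₂.card : ℝ) with hle | hlt
  · exact free_amalgam_delta_aux k V Ed F hF A B₁ B₂ hA1 hA2 hcap hne1 hne2 hfree hd1 hF2 hle
  · rw [Finset.union_comm]
    have hcap' : B₂ ∩ B₁ = A := by rw [Finset.inter_comm]; exact hcap
    have hfree' : ∀ e ∈ Ed, (∀ x ∈ e, x ∈ B₂) ∨ (∀ x ∈ e, x ∈ B₁) :=
      fun e he => (hfree e he).symm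
    have hle' : (B₂.card : ℝ) - A.card ≤ B₁.card := by
      have hA0 : (0 : ℝ) ≤ A.card := by positivity
      linarith
    exact free_amalgam_delta_aux k V Ed F hF A B₂ B₁ hA2 hA1 hcap' hne2 hne1 hfree' hd2 hF1 hle'
end

section
/- Let N = (M; S) be a k-oriented digraph (all out-degrees ≤ k), let K = Aut(N), and suppose K has finitely many orbits on M². Then there is a uniform bound l such that for every vertex a, the set of vertices reachable from a by a directed path has size at most l. -/
open scoped Classical

/-- Reachability in at most `n` steps. -/
def reachIn {V : Type*} (S : V → V → Prop) : ℕ → V → V → Prop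
  | 0, a, b => a = b
  | n+1, a, b => reachIn S n a b ∨ ∃ c, reachIn S n a c ∧ S c b

lemma reachIn_mono {V : Type*} {S : V → V → Prop} {n m : ℕ} {a b : V}
    (h : n ≤ m) (hr : reachIn S n a b) : reachIn S m a b := by
  induction h with
  | refl => exact hr
  | step _ ih => exact Or.inl ih

lemma reflTransGen_iff_reachIn {V : Type*} {S : V → V → Prop} {a b : V} :
    Relation.ReflTransGen S a b ↔ ∃ n, reachIn S n a b := by
  constructor
  · intro h
    induction h with
    | refl => exact ⟨0, rfl⟩
    | tail _ hS ih =>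
      obtain ⟨n, hn⟩ := ih
      exact ⟨n + 1, Or.inr ⟨_, hn, hS⟩⟩
  · rintro ⟨n, hn⟩
    induction n generalizing b with
    | zero => cases hn; exact Relation.ReflTransGen.refl
    | succ n ih =>
      rcases hn with hn | ⟨c, hc, hS⟩
      · exact ih hn
      · exact (ih hc).tail hS

lemma reachIn_map {V : Type*} {S : V → V → Prop} (g : V → V)
    (hg : ∀ a b, S a b → S (g a) (g b)) :
    ∀ n (a b : V), reachIn S n a b → reachIn S n (g a) (g b) := by
  intro n
  induction n with
  | zero => intro a b h; exact congrArg g h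
  | succ n ih =>
    rintro a b (h | ⟨c, hc, hS⟩)
    · exact Or.inl (ih _ _ h)
    · exact Or.inr ⟨g c, ih _ _ hc, hg _ _ hS⟩

/-- The ball of radius `n` around `a`, where `f` gives successor sets. -/
noncomputable def ball {V : Type*} (f : V → Finset V) : ℕ → V → Finset V
  | 0, a => {a}
  | n+1, a => letI := Classical.decEq V; ball f n a ∪ (ball f n a).biUnion f

lemma card_ball_le {V : Type*} {f : V → Finset V} {k : ℕ}
    (hk : ∀ a, (f a).card ≤ k) : ∀ n (a : V), (ball f n a).card ≤ (k + 1) ^ n := by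
  intro n
  induction n with
  | zero => intro a; simp [ball]
  | succ n ih =>
    intro a
    have h1 : (ball f (n+1) a).card ≤
        (ball f n a).card + ((ball f n a).biUnion f).card := by
      classical
      simpa [ball] using Finset.card_union_le (ball f n a) ((ball f n a).biUnion f)
    have h2 : ((ball f n a).biUnion f).card ≤ ∑ b ∈ ball f n a, (f b).card :=
      Finset.card_biUnion_le
    have h3 : ∑ b ∈ ball f n a, (f b).card ≤ (ball f n a).card * k := by
      calc ∑ b ∈ ball f n a, (f b).card ≤ ∑ _b ∈ ball f n a, k :=
            Finset.sum_le_sum fun b _ => hk b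
        _ = (ball f n a).card * k := by simp [mul_comm]
    have hb := ih a
    calc (ball f (n+1) a).card
        ≤ (ball f n a).card + (ball f n a).card * k := by omega
      _ ≤ (k+1)^n + (k+1)^n * k := by nlinarith
      _ = (k+1)^(n+1) := by ring

lemma mem_ball_of_reachIn {V : Type*} {S : V → V → Prop} {f : V → Finset V}
    (hf : ∀ a b, S a b → b ∈ f a) :
    ∀ n (a b : V), reachIn S n a b → b ∈ ball f n a := by
  intro n
  induction n with
  | zero => intro a b h; cases h; simp [ball]
  | succ n ih =>
    classical
    rintro a b (h | ⟨c, hc, hS⟩)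
    · exact Finset.mem_union_left _ (ih _ _ h)
    · exact Finset.mem_union_right _ (Finset.mem_biUnion.2 ⟨c, ih _ _ hc, hf _ _ hS⟩)

/-- If `N = (M; S)` is a `k`-oriented digraph (all out-degrees `≤ k`) whose
automorphism group has finitely many orbits on `M²`, then there is a uniform bound
`l` on the size of the set of vertices reachable from any vertex by a directed path. -/
theorem reachable_uniform_bound (k : ℕ) (V : Type*)
    (S : V → V → Prop)
    (hout : ∀ a : V, {b | S a b}.Finite ∧ {b | S a b}.ncard ≤ k)
    (horb : ∃ T : Finset (V × V), ∀ p : V × V, ∃ q ∈ T, ∃ g : Equiv.Perm V,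
        (∀ a b, S a b ↔ S (g a) (g b)) ∧ g q.1 = p.1 ∧ g q.2 = p.2) :
    ∃ l : ℕ, ∀ a : V,
      {b | Relation.ReflTransGen S a b}.Finite ∧
      {b | Relation.ReflTransGen S a b}.ncard ≤ l := by
  classical
  obtain ⟨T, hT⟩ := horb
  set f : V → Finset V := fun a => (hout a).1.toFinset with hf
  have hfmem : ∀ a b, S a b → b ∈ f a := fun a b h => (Set.Finite.mem_toFinset _).2 h
  have hfcard : ∀ a, (f a).card ≤ k := by
    intro a
    have h := (hout a).2
    rwa [Set.ncard_eq_toFinset_card _ (hout a).1] at h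
  -- distance value for each orbit representative
  have dspec : ∀ q : V × V, Relation.ReflTransGen S q.1 q.2 → ∃ n, reachIn S n q.1 q.2 :=
    fun q h => reflTransGen_iff_reachIn.1 h
  set dval : V × V → ℕ := fun q =>
    if h : Relation.ReflTransGen S q.1 q.2 then Classical.choose (dspec q h) else 0 with hd
  set R : ℕ := T.sup dval with hR
  have key : ∀ a b : V, Relation.ReflTransGen S a b → reachIn S R a b := by
    intro a b hab
    obtain ⟨q, hqT, g, hg, h1', h2'⟩ := hT (a, b)
    have h1 : g q.1 = a := h1'
    have h2 : g q.2 = b := h2'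
    have hg1 : ∀ x y, S x y → S (g x) (g y) := fun x y h => (hg x y).1 h
    have hg2 : ∀ x y, S x y → S (g.symm x) (g.symm y) := by
      intro x y h
      have := (hg (g.symm x) (g.symm y)).2
      simp only [Equiv.apply_symm_apply] at this
      exact this h
    obtain ⟨n, hn⟩ := reflTransGen_iff_reachIn.1 hab
    have hq : reachIn S n q.1 q.2 := by
      have := reachIn_map g.symm hg2 n a b hn
      rwa [← h1, ← h2, Equiv.symm_apply_apply, Equiv.symm_apply_apply] at this
    have hqr : Relation.ReflTransGen S q.1 q.2 := reflTransGen_iff_reachIn.2 ⟨n, hq⟩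
    have hspec : reachIn S (dval q) q.1 q.2 := by
      rw [hd]; simp only [dif_pos hqr]
      exact Classical.choose_spec (dspec q hqr)
    have hle : dval q ≤ R := Finset.le_sup hqT
    have hq2 : reachIn S R q.1 q.2 := reachIn_mono hle hspec
    have := reachIn_map g hg1 R q.1 q.2 hq2
    rwa [h1, h2] at this
  refine ⟨(k + 1) ^ R, fun a => ?_⟩
  have hsub : {b | Relation.ReflTransGen S a b} ⊆ ↑(ball f R a) := by
    intro b hb
    exact mem_ball_of_reachIn hfmem R a b (key a b hb)
  have hfin : {b | Relation.ReflTransGen S a b}.Finite :=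
    Set.Finite.subset (ball f R a).finite_toSet hsub
  refine ⟨hfin, ?_⟩
  calc {b | Relation.ReflTransGen S a b}.ncard
      ≤ (↑(ball f R a) : Set V).ncard :=
        Set.ncard_le_ncard hsub (ball f R a).finite_toSet
    _ = (ball f R a).card := Set.ncard_coe_finset _
    _ ≤ (k + 1) ^ R := card_ball_le hfcard R a
end

section
/- Let A, B₁, B₂ be finite k-oriented digraphs with A successor-d-closed in both B₁ and B₂, and suppose B₁ and B₂ are d-fine (have no proper refinement with respect to successor-d-closed sets). Then the free amalgam C of B₁ and B₂ over A is d-fine. -/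
open scoped Classical

/-- A `k`-oriented digraph: loopless, asymmetric, all out-degrees at most `k`. -/
def IsKDigraph (k : ℕ) {V : Type*} [Fintype V] (S : V → V → Prop) : Prop :=
  (∀ a, ¬ S a a) ∧ (∀ a b, ¬ (S a b ∧ S b a)) ∧
    ∀ a : V, (Finset.univ.filter fun b => S a b).card ≤ k

/-- Two digraphs are orientations of the same underlying undirected graph. -/
def SameGraph {V : Type*} (S S' : V → V → Prop) : Prop :=
  ∀ a b, (S a b ∨ S b a) ↔ (S' a b ∨ S' b a)

/-- `D` is successor-d-closed in `S`: successor-closed, and every vertex all of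
whose reachable roots (vertices of out-degree `< k`) are reachable from `D`
belongs to `D`. -/
def SDClosed (k : ℕ) {V : Type*} [Fintype V] (S : V → V → Prop) (D : Set V) : Prop :=
  (∀ a ∈ D, ∀ b, S a b → b ∈ D) ∧
  ∀ v : V, (∀ r : V, (Finset.univ.filter fun b => S r b).card < k →
      Relation.ReflTransGen S v r → ∃ d ∈ D, Relation.ReflTransGen S d r) → v ∈ D

/-- `S'` is a d-refinement of `S`: a `k`-orientation of the same undirected graph in
which every successor-d-closed subset of `S` is again successor-d-closed. -/
def RefinesD (k : ℕ) {V : Type*} [Fintype V] (S' S : V → V → Prop) : Prop :=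
  IsKDigraph k S' ∧ SameGraph S S' ∧ ∀ D : Set V, SDClosed k S D → SDClosed k S' D

/-- `S` is d-fine: it has no proper d-refinement. -/
def DFine (k : ℕ) {V : Type*} [Fintype V] (S : V → V → Prop) : Prop :=
  IsKDigraph k S ∧ ∀ S' : V → V → Prop, RefinesD k S' S → RefinesD k S S'

set_option linter.unusedSectionVars false
section Aux
variable {V : Type*} [Fintype V] {k : ℕ} {S : V → V → Prop} {B : Finset V}

theorem amalg_reach_up {x y : {v // v ∈ B}}
    (h : Relation.ReflTransGen (fun a b : {v // v ∈ B} => S a b) x y) :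
    Relation.ReflTransGen S (x : V) (y : V) := by
  induction h with
  | refl => exact .refl
  | tail _ hstep ih => exact ih.tail hstep

theorem amalg_reach_down (hsc : ∀ a ∈ B, ∀ b, S a b → b ∈ B) {x y : V} (hx : x ∈ B)
    (h : Relation.ReflTransGen S x y) :
    ∃ hy : y ∈ B, Relation.ReflTransGen (fun a b : {v // v ∈ B} => S a b) ⟨x, hx⟩ ⟨y, hy⟩ := by
  induction h with
  | refl => exact ⟨hx, .refl⟩
  | @tail b c _ hstep ih =>
    obtain ⟨hb, hr⟩ := ih
    exact ⟨hsc _ hb _ hstep, hr.tail hstep⟩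

theorem amalg_deg_eq (hsc : ∀ a ∈ B, ∀ b, S a b → b ∈ B) (x : {v // v ∈ B}) :
    (Finset.univ.filter fun b : {v // v ∈ B} => S x b).card
      = (Finset.univ.filter fun b => S (x : V) b).card := by
  refine Finset.card_bij (fun b _ => (b : V)) ?_ ?_ ?_
  · intro b hb; simp only [Finset.mem_filter, Finset.mem_univ, true_and] at hb ⊢; exact hb
  · intro a _ b _ h; exact Subtype.ext h
  · intro b hb
    simp only [Finset.mem_filter, Finset.mem_univ, true_and] at hb
    exact ⟨⟨b, hsc _ x.2 _ hb⟩, by simp [hb]⟩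

theorem amalg_mem_of_reach {D : Set V}
    (hD : ∀ a ∈ D, ∀ b, S a b → b ∈ D) {d r : V} (hd : d ∈ D)
    (h : Relation.ReflTransGen S d r) : r ∈ D := by
  induction h with
  | refl => exact hd
  | tail _ hstep ih => exact hD _ ih _ hstep

theorem amalg_sdclosed_down (hsc : ∀ a ∈ B, ∀ b, S a b → b ∈ B) {D : Set V}
    (hD : SDClosed k S D) :
    SDClosed k (fun a b : {v // v ∈ B} => S a b) {x | ↑x ∈ D} := by
  constructor
  · intro a ha b hab; exact hD.1 _ ha _ hab
  · intro v hv
    apply hD.2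
    intro r hr hreach
    obtain ⟨hrB, hreach'⟩ := amalg_reach_down hsc v.2 hreach
    have hr' : (Finset.univ.filter fun b : {x // x ∈ B} => S ((⟨r, hrB⟩ : {x // x ∈ B}) : V) b).card < k := by
      rw [amalg_deg_eq hsc]; exact hr
    obtain ⟨d, hd, hdr⟩ := hv ⟨r, hrB⟩ hr' hreach'
    exact ⟨d, hd, amalg_reach_up hdr⟩

theorem amalg_mem_of_roots (hsc : ∀ a ∈ B, ∀ b, S a b → b ∈ B)
    {E : Set {v // v ∈ B}}
    (hE : SDClosed k (fun a b : {v // v ∈ B} => S a b) E)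
    {b : V} (hb : b ∈ B)
    (h : ∀ r, (Finset.univ.filter fun c => S r c).card < k → Relation.ReflTransGen S b r →
        ∃ hr : r ∈ B, (⟨r, hr⟩ : {v // v ∈ B}) ∈ E) :
    (⟨b, hb⟩ : {v // v ∈ B}) ∈ E := by
  apply hE.2
  intro r hrdeg hreach
  have hfull : (Finset.univ.filter fun c => S (r : V) c).card < k := by
    rw [← amalg_deg_eq hsc]; exact hrdeg
  obtain ⟨hr, he⟩ := h r hfull (amalg_reach_up hreach)
  exact ⟨r, he, .refl⟩

theorem amalg_sdclosed_lift (hsc : ∀ a ∈ B, ∀ b, S a b → b ∈ B)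
    {E : Set {v // v ∈ B}}
    (hE : SDClosed k (fun a b : {v // v ∈ B} => S a b) E) :
    ∃ D : Set V, SDClosed k S D ∧ ∀ x : {v // v ∈ B}, x ∈ E ↔ (x : V) ∈ D := by
  refine ⟨{v | (∃ h : v ∈ B, (⟨v, h⟩ : {x // x ∈ B}) ∈ E) ∨
      (v ∉ B ∧ ∀ r, (Finset.univ.filter fun c => S r c).card < k →
        Relation.ReflTransGen S v r →
        ∃ h : r ∈ B, (⟨r, h⟩ : {x // x ∈ B}) ∈ E)}, ?_, ?_⟩
  · have cond1 : ∀ a ∈ {v | (∃ h : v ∈ B, (⟨v, h⟩ : {x // x ∈ B}) ∈ E) ∨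
      (v ∉ B ∧ ∀ r, (Finset.univ.filter fun c => S r c).card < k →
        Relation.ReflTransGen S v r →
        ∃ h : r ∈ B, (⟨r, h⟩ : {x // x ∈ B}) ∈ E)}, ∀ b, S a b →
        b ∈ {v | (∃ h : v ∈ B, (⟨v, h⟩ : {x // x ∈ B}) ∈ E) ∨
      (v ∉ B ∧ ∀ r, (Finset.univ.filter fun c => S r c).card < k →
        Relation.ReflTransGen S v r →
        ∃ h : r ∈ B, (⟨r, h⟩ : {x // x ∈ B}) ∈ E)} := by
      rintro a (⟨ha, hae⟩ | ⟨haB, hroots⟩) b hab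
      · exact Or.inl ⟨hsc _ ha _ hab, hE.1 _ hae ⟨b, hsc _ ha _ hab⟩ hab⟩
      · have hroots' : ∀ r, (Finset.univ.filter fun c => S r c).card < k →
            Relation.ReflTransGen S b r →
            ∃ h : r ∈ B, (⟨r, h⟩ : {x // x ∈ B}) ∈ E := by
          intro r hr hre
          exact hroots r hr (Relation.ReflTransGen.head hab hre)
        by_cases hb : b ∈ B
        · exact Or.inl ⟨hb, amalg_mem_of_roots hsc hE hb hroots'⟩
        · exact Or.inr ⟨hb, hroots'⟩
    refine ⟨cond1, ?_⟩
    intro v hv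
    have key : ∀ r, (Finset.univ.filter fun c => S r c).card < k →
        Relation.ReflTransGen S v r → ∃ h : r ∈ B, (⟨r, h⟩ : {x // x ∈ B}) ∈ E := by
      intro r hr hre
      obtain ⟨d, hd, hdr⟩ := hv r hr hre
      have hrD := amalg_mem_of_reach cond1 hd hdr
      rcases hrD with ⟨h, he⟩ | ⟨hrB, hroots⟩
      · exact ⟨h, he⟩
      · exact absurd (hroots r hr .refl).1 hrB
    by_cases hvB : v ∈ B
    · exact Or.inl ⟨hvB, amalg_mem_of_roots hsc hE hvB key⟩
    · exact Or.inr ⟨hvB, key⟩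
  · intro x
    constructor
    · intro hx; exact Or.inl ⟨x.2, hx⟩
    · rintro (⟨h, he⟩ | ⟨hnB, _⟩)
      · exact he
      · exact absurd x.2 hnB

end Aux

section Aux2
variable {V : Type*} [Fintype V] {k : ℕ} {S : V → V → Prop}

theorem amalg_sdclosed_up {B₁ B₂ : Finset V}
    (hcup : B₁ ∪ B₂ = Finset.univ)
    (hedges : ∀ a b, S a b → (a ∈ B₁ ∧ b ∈ B₁) ∨ (a ∈ B₂ ∧ b ∈ B₂))
    (hsc1 : ∀ a ∈ B₁, ∀ b, S a b → b ∈ B₁)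
    (hsc2 : ∀ a ∈ B₂, ∀ b, S a b → b ∈ B₂)
    {D : Set V}
    (hD1 : SDClosed k (fun a b : {v // v ∈ B₁} => S a b) {x | ↑x ∈ D})
    (hD2 : SDClosed k (fun a b : {v // v ∈ B₂} => S a b) {x | ↑x ∈ D}) :
    SDClosed k S D := by
  have cond1 : ∀ a ∈ D, ∀ b, S a b → b ∈ D := by
    intro a ha b hab
    rcases hedges a b hab with ⟨h1, h2⟩ | ⟨h1, h2⟩
    · exact hD1.1 ⟨a, h1⟩ ha ⟨b, h2⟩ hab
    · exact hD2.1 ⟨a, h1⟩ ha ⟨b, h2⟩ hab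
  refine ⟨cond1, ?_⟩
  intro v hv
  have key : ∀ r, (Finset.univ.filter fun c => S r c).card < k →
      Relation.ReflTransGen S v r → r ∈ D := by
    intro r hr hre
    obtain ⟨d, hd, hdr⟩ := hv r hr hre
    exact amalg_mem_of_reach cond1 hd hdr
  have hvmem : v ∈ B₁ ∨ v ∈ B₂ := by
    have h := Finset.mem_univ v
    rw [← hcup, Finset.mem_union] at h
    exact h
  rcases hvmem with hv1 | hv1
  · refine hD1.2 ⟨v, hv1⟩ ?_
    intro r hrdeg hreach
    have hfull : (Finset.univ.filter fun c => S (r : V) c).card < k := by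
      rw [← amalg_deg_eq hsc1]; exact hrdeg
    exact ⟨r, key (r : V) hfull (amalg_reach_up hreach), .refl⟩
  · refine hD2.2 ⟨v, hv1⟩ ?_
    intro r hrdeg hreach
    have hfull : (Finset.univ.filter fun c => S (r : V) c).card < k := by
      rw [← amalg_deg_eq hsc2]; exact hrdeg
    exact ⟨r, key (r : V) hfull (amalg_reach_up hreach), .refl⟩

end Aux2


/-- The free amalgam of two d-fine `k`-oriented digraphs `B₁, B₂` over a common
successor-d-closed part `A` is d-fine. -/
theorem free_amalgam_dfine (k : ℕ) (V : Type*) [Fintype V]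
    (A B₁ B₂ : Finset V) (hA1 : A ⊆ B₁) (hA2 : A ⊆ B₂)
    (hcap : B₁ ∩ B₂ = A) (hcup : B₁ ∪ B₂ = Finset.univ)
    (S : V → V → Prop) (hK : IsKDigraph k S)
    (hedges : ∀ a b : V, S a b → (a ∈ B₁ ∧ b ∈ B₁) ∨ (a ∈ B₂ ∧ b ∈ B₂))
    (hfine1 : DFine k (fun a b : {x // x ∈ B₁} => S a b))
    (hfine2 : DFine k (fun a b : {x // x ∈ B₂} => S a b))
    (hA1c : SDClosed k (fun a b : {x // x ∈ B₁} => S a b) {x | ↑x ∈ A})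
    (hA2c : SDClosed k (fun a b : {x // x ∈ B₂} => S a b) {x | ↑x ∈ A}) :
    DFine k S := by
  classical
  have hsc1 : ∀ a ∈ B₁, ∀ b, S a b → b ∈ B₁ := by
    intro a ha b hab
    rcases hedges a b hab with ⟨_, h2⟩ | ⟨h1, h2⟩
    · exact h2
    · have haA : a ∈ A := by rw [← hcap]; exact Finset.mem_inter.mpr ⟨ha, h1⟩
      exact hA1 (hA2c.1 ⟨a, h1⟩ haA ⟨b, h2⟩ hab)
  have hsc2 : ∀ a ∈ B₂, ∀ b, S a b → b ∈ B₂ := by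
    intro a ha b hab
    rcases hedges a b hab with ⟨h1, h2⟩ | ⟨_, h2⟩
    · have haA : a ∈ A := by rw [← hcap]; exact Finset.mem_inter.mpr ⟨h1, ha⟩
      exact hA2 (hA1c.1 ⟨a, h1⟩ haA ⟨b, h2⟩ hab)
    · exact h2
  have hAfull : SDClosed k S {v : V | v ∈ A} :=
    amalg_sdclosed_up hcup hedges hsc1 hsc2 hA1c hA2c
  refine ⟨hK, ?_⟩
  intro S' hS'
  obtain ⟨hK', hsame, href⟩ := hS'
  have hedges' : ∀ a b, S' a b → (a ∈ B₁ ∧ b ∈ B₁) ∨ (a ∈ B₂ ∧ b ∈ B₂) := by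
    intro a b hab
    rcases (hsame a b).mpr (Or.inl hab) with h | h
    · exact hedges a b h
    · rcases hedges b a h with ⟨h1, h2⟩ | ⟨h1, h2⟩
      · exact Or.inl ⟨h2, h1⟩
      · exact Or.inr ⟨h2, h1⟩
  have hA' : SDClosed k S' {v : V | v ∈ A} := href _ hAfull
  have hsc1' : ∀ a ∈ B₁, ∀ b, S' a b → b ∈ B₁ := by
    intro a ha b hab
    rcases hedges' a b hab with ⟨_, h2⟩ | ⟨h1, h2⟩
    · exact h2
    · have haA : a ∈ A := by rw [← hcap]; exact Finset.mem_inter.mpr ⟨ha, h1⟩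
      exact hA1 (hA'.1 a haA b hab)
  have hsc2' : ∀ a ∈ B₂, ∀ b, S' a b → b ∈ B₂ := by
    intro a ha b hab
    rcases hedges' a b hab with ⟨h1, h2⟩ | ⟨_, h2⟩
    · have haA : a ∈ A := by rw [← hcap]; exact Finset.mem_inter.mpr ⟨h1, ha⟩
      exact hA2 (hA'.1 a haA b hab)
    · exact h2
  have hrefines1 : ∀ E : Set {x // x ∈ B₁},
      SDClosed k (fun a b : {x // x ∈ B₁} => S a b) E →
      SDClosed k (fun a b : {x // x ∈ B₁} => S' a b) E := by
    intro E hE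
    obtain ⟨D, hD, hiff⟩ := amalg_sdclosed_lift hsc1 hE
    have hdown := amalg_sdclosed_down (S := S') hsc1' (href D hD)
    have hEeq : E = {x : {x // x ∈ B₁} | ↑x ∈ D} := Set.ext hiff
    rw [hEeq]; exact hdown
  have hrefines2 : ∀ E : Set {x // x ∈ B₂},
      SDClosed k (fun a b : {x // x ∈ B₂} => S a b) E →
      SDClosed k (fun a b : {x // x ∈ B₂} => S' a b) E := by
    intro E hE
    obtain ⟨D, hD, hiff⟩ := amalg_sdclosed_lift hsc2 hE
    have hdown := amalg_sdclosed_down (S := S') hsc2' (href D hD)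
    have hEeq : E = {x : {x // x ∈ B₂} | ↑x ∈ D} := Set.ext hiff
    rw [hEeq]; exact hdown
  have hR1 : RefinesD k (fun a b : {x // x ∈ B₁} => S' a b)
      (fun a b : {x // x ∈ B₁} => S a b) := by
    refine ⟨⟨fun a => hK'.1 ↑a, fun a b => hK'.2.1 ↑a ↑b, ?_⟩,
      fun a b => hsame ↑a ↑b, hrefines1⟩
    intro a
    rw [amalg_deg_eq (S := S') hsc1']
    exact hK'.2.2 ↑a
  have hR2 : RefinesD k (fun a b : {x // x ∈ B₂} => S' a b)
      (fun a b : {x // x ∈ B₂} => S a b) := by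
    refine ⟨⟨fun a => hK'.1 ↑a, fun a b => hK'.2.1 ↑a ↑b, ?_⟩,
      fun a b => hsame ↑a ↑b, hrefines2⟩
    intro a
    rw [amalg_deg_eq (S := S') hsc2']
    exact hK'.2.2 ↑a
  have hfineR1 := (hfine1.2 _ hR1).2.2
  have hfineR2 := (hfine2.2 _ hR2).2.2
  refine ⟨hK, fun a b => (hsame a b).symm, ?_⟩
  intro D hD
  exact amalg_sdclosed_up hcup hedges hsc1 hsc2
    (hfineR1 _ (amalg_sdclosed_down (S := S') hsc1' hD))
    (hfineR2 _ (amalg_sdclosed_down (S := S') hsc2' hD))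
end
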